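/- arXiv:1201.6551 — 2 statements merged into one kernel-verified Lean document; each statement's English description precedes it below -/
import Mathlib

section
/- Let $P$ be a probability density on a $\sigma$-finite measured space $(E,\mathcal{A},\nu)$, let $p,q$ be probability densities on a $\sigma$-finite measured space $(T,\mathcal{T},m)$, and let $(P_t)_{t\in T}$ be a measurable family of probability densities on $E$. Then $h^2\big(\int_T P_t p(t)\,dm(t),\ \int_T P_t q(t)\,dm(t)\big) \le 2 h^2(p,q)$. -/
/-!
For fixed `x`, the reverse triangle inequality in `L²(m)` applied to `t ↦ √(P t x p t)` and
`t ↦ √(P t x q t)` gives `(√(∫ P_t(x) p dm) - √(∫ P_t(x) q dm))² ≤ ∫ P_t(x) (√p - √q)² dm`.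
Integrating in `x` and using Fubini together with `∫ P_t dν = 1` yields
`h²(∫ P_t p dm, ∫ P_t q dm) ≤ h²(p, q)`, which is stronger than the claim.
-/

open MeasureTheory

/-- Squared Hellinger distance between two densities on a measured space. -/
noncomputable def hell2 {E : Type*} [MeasurableSpace E] (ν : Measure E) (f g : E → ℝ) : ℝ :=
  (1 / 2) * ∫ x, (Real.sqrt (f x) - Real.sqrt (g x)) ^ 2 ∂ν

open Real

section SqrtIntegral

variable {α : Type*} [MeasurableSpace α] {μ : Measure α}

lemma memLp_two_sqrt {f : α → ℝ} (hf0 : 0 ≤ᵐ[μ] f) (hf : Integrable f μ) :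
    MemLp (fun x => √(f x)) 2 μ :=
  (memLp_two_iff_integrable_sq
    (continuous_sqrt.comp_aestronglyMeasurable hf.aestronglyMeasurable)).2 <|
    hf.congr <| hf0.mono fun _ hx => (sq_sqrt hx).symm

lemma integral_sqrt_mul_sqrt_le {u v : α → ℝ} (hu0 : 0 ≤ᵐ[μ] u) (hv0 : 0 ≤ᵐ[μ] v)
    (hu : Integrable u μ) (hv : Integrable v μ) :
    ∫ x, √(u x) * √(v x) ∂μ ≤ √(∫ x, u x ∂μ) * √(∫ x, v x ∂μ) := by
  have hsq : ∀ {f : α → ℝ}, 0 ≤ᵐ[μ] f → ∫ x, √(f x) ^ (2 : ℝ) ∂μ = ∫ x, f x ∂μ := fun hf0 =>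
    integral_congr_ae <| hf0.mono fun x hx => by simp [sq_sqrt hx]
  have hholder := integral_mul_le_Lp_mul_Lq_of_nonneg HolderConjugate.two_two
    (ae_of_all _ fun x => sqrt_nonneg (u x)) (ae_of_all _ fun x => sqrt_nonneg (v x))
    (by simpa using memLp_two_sqrt hu0 hu) (by simpa using memLp_two_sqrt hv0 hv)
  rwa [hsq hu0, hsq hv0, ← sqrt_eq_rpow, ← sqrt_eq_rpow] at hholder

lemma sq_sqrt_integral_sub_sqrt_integral_le {u v : α → ℝ} (hu0 : 0 ≤ᵐ[μ] u) (hv0 : 0 ≤ᵐ[μ] v)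
    (hu : Integrable u μ) (hv : Integrable v μ) :
    (√(∫ x, u x ∂μ) - √(∫ x, v x ∂μ)) ^ 2 ≤ ∫ x, (√(u x) - √(v x)) ^ 2 ∂μ := by
  have huv : Integrable (fun x => √(u x) * √(v x)) μ :=
    (memLp_two_sqrt hu0 hu).integrable_mul (memLp_two_sqrt hv0 hv)
  have hexpand : ∫ x, (√(u x) - √(v x)) ^ 2 ∂μ =
      ∫ x, u x ∂μ + ∫ x, v x ∂μ - 2 * ∫ x, √(u x) * √(v x) ∂μ := by
    have hsq : (fun x => (√(u x) - √(v x)) ^ 2) =ᵐ[μ]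
        fun x => u x + v x - 2 * (√(u x) * √(v x)) := by
      filter_upwards [hu0, hv0] with x hux hvx
      rw [sub_sq, sq_sqrt hux, sq_sqrt hvx]
      ring
    rw [integral_congr_ae hsq, integral_sub ?_ (huv.const_mul 2), integral_add hu hv,
      integral_const_mul]
    exact hu.add hv
  rw [hexpand, sub_sq, sq_sqrt (integral_nonneg_of_ae hu0), sq_sqrt (integral_nonneg_of_ae hv0)]
  linarith [integral_sqrt_mul_sqrt_le hu0 hv0 hu hv]

lemma sq_sqrt_integral_mul_sub_le {w u v : α → ℝ} (hw0 : 0 ≤ᵐ[μ] w) (hu0 : 0 ≤ᵐ[μ] u)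
    (hv0 : 0 ≤ᵐ[μ] v) (hu : Integrable (fun x => w x * u x) μ)
    (hv : Integrable (fun x => w x * v x) μ) :
    (√(∫ x, w x * u x ∂μ) - √(∫ x, w x * v x ∂μ)) ^ 2 ≤
      ∫ x, w x * (√(u x) - √(v x)) ^ 2 ∂μ := by
  have hwu : 0 ≤ᵐ[μ] fun x => w x * u x := by
    filter_upwards [hw0, hu0] with x hw hu using mul_nonneg hw hu
  have hwv : 0 ≤ᵐ[μ] fun x => w x * v x := by
    filter_upwards [hw0, hv0] with x hw hv using mul_nonneg hw hv
  refine (sq_sqrt_integral_sub_sqrt_integral_le hwu hwv hu hv).trans_eq (integral_congr_ae ?_)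
  filter_upwards [hw0] with x hw
  rw [sqrt_mul hw, sqrt_mul hw, ← mul_sub, mul_pow, sq_sqrt hw]

end SqrtIntegral

section Mixture

variable {T E : Type*} [MeasurableSpace T] [MeasurableSpace E] {m : Measure T} {ν : Measure E}
  {P : T → E → ℝ}

lemma integrable_prod_mul_of_integral_eq_one [SFinite ν] {c : T → ℝ}
    (hP0 : ∀ t x, 0 ≤ P t x) (hPm : Measurable (Function.uncurry P))
    (hP1 : ∀ t, ∫ x, P t x ∂ν = 1) (hc : Integrable c m) :
    Integrable (fun z : T × E => P z.1 z.2 * c z.1) (m.prod ν) := by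
  have hmeas : AEStronglyMeasurable (fun z : T × E => P z.1 z.2 * c z.1) (m.prod ν) :=
    hPm.aestronglyMeasurable.mul hc.aestronglyMeasurable.comp_fst
  have hPt (t : T) : Integrable (P t) ν := .of_integral_ne_zero (by simp [hP1 t])
  refine (integrable_prod_iff hmeas).2
    ⟨ae_of_all _ fun t => (hPt t).mul_const (c t), hc.norm.congr (ae_of_all _ fun t => ?_)⟩
  simp only [norm_mul, norm_of_nonneg (hP0 t _)]
  rw [integral_mul_const, hP1 t, one_mul]

lemma integral_integral_mul_of_integral_eq_one [SFinite m] [SFinite ν] {c : T → ℝ}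
    (hP0 : ∀ t x, 0 ≤ P t x) (hPm : Measurable (Function.uncurry P))
    (hP1 : ∀ t, ∫ x, P t x ∂ν = 1) (hc : Integrable c m) :
    ∫ x, ∫ t, P t x * c t ∂m ∂ν = ∫ t, c t ∂m := by
  rw [← integral_integral_swap (integrable_prod_mul_of_integral_eq_one hP0 hPm hP1 hc)]
  simp_rw [integral_mul_const, hP1, one_mul]

theorem hell2_mixture_le [SFinite m] [SFinite ν] {p q : T → ℝ}
    (hp0 : ∀ t, 0 ≤ p t) (hq0 : ∀ t, 0 ≤ q t) (hp : Integrable p m) (hq : Integrable q m)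
    (hP0 : ∀ t x, 0 ≤ P t x) (hPm : Measurable (Function.uncurry P))
    (hP1 : ∀ t, ∫ x, P t x ∂ν = 1) :
    hell2 ν (fun x => ∫ t, P t x * p t ∂m) (fun x => ∫ t, P t x * q t ∂m) ≤ hell2 m p q := by
  set c : T → ℝ := fun t => (√(p t) - √(q t)) ^ 2
  have hc : Integrable c m :=
    ((memLp_two_sqrt (ae_of_all _ hp0) hp).sub (memLp_two_sqrt (ae_of_all _ hq0) hq)).integrable_sq
  have hpointwise : ∀ᵐ x ∂ν, (√(∫ t, P t x * p t ∂m) - √(∫ t, P t x * q t ∂m)) ^ 2 ≤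
      ∫ t, P t x * c t ∂m := by
    filter_upwards [(integrable_prod_mul_of_integral_eq_one hP0 hPm hP1 hp).prod_left_ae,
      (integrable_prod_mul_of_integral_eq_one hP0 hPm hP1 hq).prod_left_ae] with x hpx hqx
    exact sq_sqrt_integral_mul_sub_le (ae_of_all _ fun t => hP0 t x) (ae_of_all _ hp0)
      (ae_of_all _ hq0) hpx hqx
  unfold hell2
  gcongr
  calc _ ≤ ∫ x, ∫ t, P t x * c t ∂m ∂ν :=
        integral_mono_of_nonneg (ae_of_all _ fun _ => sq_nonneg _)
          (integrable_prod_mul_of_integral_eq_one hP0 hPm hP1 hc).integral_prod_right hpointwise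
    _ = ∫ t, c t ∂m := integral_integral_mul_of_integral_eq_one hP0 hPm hP1 hc

end Mixture

theorem hellinger_mixture_weights_general {T E : Type*} [MeasurableSpace T] [MeasurableSpace E]
    (m : Measure T) (ν : Measure E) [SigmaFinite m] [SigmaFinite ν]
    (p q : T → ℝ) (P : T → E → ℝ)
    (hp0 : ∀ t, 0 ≤ p t) (hq0 : ∀ t, 0 ≤ q t)
    (hp1 : ∫ t, p t ∂m = 1) (hq1 : ∫ t, q t ∂m = 1)
    (hP0 : ∀ t x, 0 ≤ P t x)
    (hPm : Measurable (Function.uncurry P))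
    (hP1 : ∀ t, ∫ x, P t x ∂ν = 1) :
    hell2 ν (fun x => ∫ t, P t x * p t ∂m) (fun x => ∫ t, P t x * q t ∂m) ≤
      2 * hell2 m p q := by
  have hp : Integrable p m := .of_integral_ne_zero (by simp [hp1])
  have hq : Integrable q m := .of_integral_ne_zero (by simp [hq1])
  have hnonneg : 0 ≤ hell2 m p q := by unfold hell2; positivity
  linarith [hell2_mixture_le hp0 hq0 hp hq hP0 hPm hP1]

/-- Changing only the mixing weights: `h²(∫ P_t p(t) dm, ∫ P_t q(t) dm) ≤ 2 h²(p,q)`. -/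
theorem hellinger_mixture_weights {T E : Type*} [MeasurableSpace T] [MeasurableSpace E]
    (m : Measure T) (ν : Measure E) [SigmaFinite m] [SigmaFinite ν]
    (p q : T → ℝ) (P : T → E → ℝ)
    (hp0 : ∀ t, 0 ≤ p t) (hq0 : ∀ t, 0 ≤ q t)
    (hpm : Measurable p) (hqm : Measurable q)
    (hp1 : ∫ t, p t ∂m = 1) (hq1 : ∫ t, q t ∂m = 1)
    (hP0 : ∀ t x, 0 ≤ P t x)
    (hPm : Measurable (Function.uncurry P))
    (hP1 : ∀ t, ∫ x, P t x ∂ν = 1) :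
    hell2 ν (fun x => ∫ t, P t x * p t ∂m) (fun x => ∫ t, P t x * q t ∂m) ≤
      2 * hell2 m p q :=
  hellinger_mixture_weights_general m ν p q P hp0 hq0 hp1 hq1 hP0 hPm hP1
end

section
/- Let $\lambda,\gamma$ be sequences in $[0,1]$ with $\sum\lambda_j^2<\infty$, $\sum\gamma_j^2<\infty$, and set $\check\lambda_j = 1-\sqrt{1-\lambda_j^2}$, $\check\gamma_j=1-\sqrt{1-\gamma_j^2}$. Then the Hellinger distance between the product-Bernoulli-type distributions $p^\lambda$ and $p^\gamma$ on finite subsets of $\mathbb{N}^*$ satisfies $h^2(p^\lambda,p^\gamma) \le \sum_{j\ge1}|\lambda_j-\gamma_j|^2 + \sum_{j\ge1}|\check\lambda_j-\check\gamma_j|^2$. -/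
/-!
The Hellinger affinity `∑_J √(p^λ_J p^γ_J)` of the two product laws is the product of the
one-coordinate affinities `λ_j γ_j + √(1 - λ_j²) √(1 - γ_j²) = 1 - (|λ_j - γ_j|² + |λ̌_j - γ̌_j|²) / 2`,
and `1 - ∏ (1 - u_j) ≤ ∑ u_j` for `u_j ∈ [0, 1]`. This is exact on the first `n` coordinates;
`p^λ_J` is the limit of its restrictions to `range n`, so every finite partial sum of
`∑_J (√p^λ_J - √p^γ_J)²` is bounded by `∑_j (|λ_j - γ_j|² + |λ̌_j - γ̌_j|²)`.
-/

/-- The probability of the finite subset `J` under the determinantal mixing distribution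
with parameter sequence `lam`. -/
noncomputable def pdet (lam : ℕ → ℝ) (J : Finset ℕ) : ℝ :=
  ∏' j, if j ∈ J then lam j ^ 2 else 1 - lam j ^ 2

open Finset Filter Topology

theorem multipliable_of_nonneg_of_le_one {ι : Type*} {f : ι → ℝ} (h0 : ∀ i, 0 ≤ f i)
    (h1 : ∀ i, f i ≤ 1) : Multipliable f :=
  ⟨_, tendsto_atTop_ciInf (prod_anti_set_of_le_one h0 h1)
    ⟨0, by rintro _ ⟨s, rfl⟩; exact prod_nonneg fun i _ => h0 i⟩⟩

theorem one_sub_sum_le_prod_one_sub {ι : Type*} {u : ι → ℝ} (s : Finset ι)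
    (h0 : ∀ i ∈ s, 0 ≤ u i) (h1 : ∀ i ∈ s, u i ≤ 1) :
    1 - ∑ i ∈ s, u i ≤ ∏ i ∈ s, (1 - u i) := by
  induction s using Finset.cons_induction with
  | empty => simp
  | cons i s hi ih =>
    simp only [forall_mem_cons] at h0 h1
    rw [prod_cons, sum_cons]
    have hprod : 0 ≤ ∏ j ∈ s, (1 - u j) := prod_nonneg fun j hj => sub_nonneg.2 (h1.2 j hj)
    have hsum : 0 ≤ ∑ j ∈ s, u j := sum_nonneg h0.2
    nlinarith [mul_le_mul_of_nonneg_left (ih h0.2 h1.2) (sub_nonneg.2 h1.1),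
      mul_nonneg h0.1 hsum]

theorem sum_powerset_prod_ite {ι R : Type*} [CommSemiring R] [DecidableEq ι] (f g : ι → R)
    (s : Finset ι) :
    ∑ t ∈ s.powerset, ∏ i ∈ s, (if i ∈ t then f i else g i) = ∏ i ∈ s, (f i + g i) := by
  rw [prod_add]
  refine sum_congr rfl fun t ht => ?_
  rw [prod_ite, filter_mem_eq_inter, inter_eq_right.2 (mem_powerset.1 ht),
    ← sdiff_eq_filter]

theorem mul_add_sqrt_mul_sqrt_eq {x y : ℝ} (hx : x ^ 2 ≤ 1) (hy : y ^ 2 ≤ 1) :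
    x * y + √(1 - x ^ 2) * √(1 - y ^ 2) =
      1 - (|x - y| ^ 2 + |(1 - √(1 - x ^ 2)) - (1 - √(1 - y ^ 2))| ^ 2) / 2 := by
  rw [sq_abs, sq_abs]
  linear_combination (1 / 2 : ℝ) * Real.sq_sqrt (sub_nonneg.2 hx) +
    (1 / 2 : ℝ) * Real.sq_sqrt (sub_nonneg.2 hy)

theorem sq_abs_sqrt_one_sub_sq_sub_le {x y : ℝ} (hx : x ^ 2 ≤ 1) (hy : y ^ 2 ≤ 1) :
    |(1 - √(1 - x ^ 2)) - (1 - √(1 - y ^ 2))| ^ 2 ≤ x ^ 2 + y ^ 2 := by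
  have hs := Real.sq_sqrt (sub_nonneg.2 hx)
  have ht := Real.sq_sqrt (sub_nonneg.2 hy)
  have hs1 : √(1 - x ^ 2) ≤ 1 := Real.sqrt_le_one.2 (by nlinarith)
  have ht1 : √(1 - y ^ 2) ≤ 1 := Real.sqrt_le_one.2 (by nlinarith)
  rw [sq_abs]
  nlinarith [Real.sqrt_nonneg (1 - x ^ 2), Real.sqrt_nonneg (1 - y ^ 2),
    mul_le_mul hs1 ht1 (Real.sqrt_nonneg _) zero_le_one]

section FiniteRestriction

variable {ι : Type*} [DecidableEq ι]

noncomputable def pdetOn (lam : ι → ℝ) (s J : Finset ι) : ℝ :=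
  ∏ j ∈ s, if j ∈ J then lam j ^ 2 else 1 - lam j ^ 2

theorem pdetOn_nonneg {lam : ι → ℝ} {s : Finset ι} (hlam : ∀ j ∈ s, lam j ^ 2 ≤ 1)
    (J : Finset ι) : 0 ≤ pdetOn lam s J :=
  prod_nonneg fun j hj => by split_ifs <;> nlinarith [hlam j hj]

theorem sum_powerset_pdetOn (lam : ι → ℝ) (s : Finset ι) :
    ∑ J ∈ s.powerset, pdetOn lam s J = 1 := by
  simp [pdetOn, sum_powerset_prod_ite]

theorem sqrt_pdetOn_mul_sqrt_pdetOn {lam gam : ι → ℝ} {s : Finset ι}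
    (hlam : ∀ j ∈ s, lam j ∈ Set.Icc (0 : ℝ) 1) (hgam : ∀ j ∈ s, gam j ∈ Set.Icc (0 : ℝ) 1)
    (J : Finset ι) :
    √(pdetOn lam s J) * √(pdetOn gam s J) =
      ∏ j ∈ s, if j ∈ J then lam j * gam j else √(1 - lam j ^ 2) * √(1 - gam j ^ 2) := by
  have hnonneg : ∀ (c : ι → ℝ), (∀ j ∈ s, c j ∈ Set.Icc (0 : ℝ) 1) → ∀ j ∈ s,
      0 ≤ if j ∈ J then c j ^ 2 else 1 - c j ^ 2 := fun c hc j hj => by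
    obtain ⟨h0, h1⟩ := hc j hj
    split_ifs <;> nlinarith
  rw [pdetOn, pdetOn, Real.sqrt_prod _ (hnonneg lam hlam), Real.sqrt_prod _ (hnonneg gam hgam),
    ← prod_mul_distrib]
  refine prod_congr rfl fun j hj => ?_
  split_ifs
  · rw [Real.sqrt_sq (hlam j hj).1, Real.sqrt_sq (hgam j hj).1]
  · rfl

theorem sum_powerset_sub_sqrt_pdetOn_sq {lam gam : ι → ℝ} {s : Finset ι}
    (hlam : ∀ j ∈ s, lam j ∈ Set.Icc (0 : ℝ) 1) (hgam : ∀ j ∈ s, gam j ∈ Set.Icc (0 : ℝ) 1) :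
    ∑ J ∈ s.powerset, (√(pdetOn lam s J) - √(pdetOn gam s J)) ^ 2 =
      2 - 2 * ∏ j ∈ s, (lam j * gam j + √(1 - lam j ^ 2) * √(1 - gam j ^ 2)) := by
  have hsq : ∀ c : ι → ℝ, (∀ j ∈ s, c j ∈ Set.Icc (0 : ℝ) 1) → ∀ J,
      √(pdetOn c s J) ^ 2 = pdetOn c s J := fun c hc J =>
    Real.sq_sqrt (pdetOn_nonneg (fun j hj => pow_le_one₀ (hc j hj).1 (hc j hj).2) J)
  have hexpand : ∀ J, (√(pdetOn lam s J) - √(pdetOn gam s J)) ^ 2 =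
      pdetOn lam s J + pdetOn gam s J - 2 * (√(pdetOn lam s J) * √(pdetOn gam s J)) :=
    fun J => by linear_combination hsq lam hlam J + hsq gam hgam J
  simp only [hexpand, sum_sub_distrib, sum_add_distrib, sum_powerset_pdetOn, ← mul_sum,
    sqrt_pdetOn_mul_sqrt_pdetOn hlam hgam, sum_powerset_prod_ite]
  ring

theorem sum_powerset_sub_sqrt_pdetOn_sq_le {lam gam : ι → ℝ} {s : Finset ι}
    (hlam : ∀ j ∈ s, lam j ∈ Set.Icc (0 : ℝ) 1) (hgam : ∀ j ∈ s, gam j ∈ Set.Icc (0 : ℝ) 1) :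
    ∑ J ∈ s.powerset, (√(pdetOn lam s J) - √(pdetOn gam s J)) ^ 2 ≤
      ∑ j ∈ s, (|lam j - gam j| ^ 2 +
        |(1 - √(1 - lam j ^ 2)) - (1 - √(1 - gam j ^ 2))| ^ 2) := by
  set u : ι → ℝ := fun j => (|lam j - gam j| ^ 2 +
    |(1 - √(1 - lam j ^ 2)) - (1 - √(1 - gam j ^ 2))| ^ 2) / 2
  have haff : ∀ j ∈ s, lam j * gam j + √(1 - lam j ^ 2) * √(1 - gam j ^ 2) = 1 - u j :=
    fun j hj => mul_add_sqrt_mul_sqrt_eq (pow_le_one₀ (hlam j hj).1 (hlam j hj).2)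
      (pow_le_one₀ (hgam j hj).1 (hgam j hj).2)
  have hu0 : ∀ j ∈ s, 0 ≤ u j := fun j _ => by positivity
  have hu1 : ∀ j ∈ s, u j ≤ 1 := fun j hj => by
    have := haff j hj
    nlinarith [mul_nonneg (hlam j hj).1 (hgam j hj).1,
      mul_nonneg (Real.sqrt_nonneg (1 - lam j ^ 2)) (Real.sqrt_nonneg (1 - gam j ^ 2))]
  rw [sum_powerset_sub_sqrt_pdetOn_sq hlam hgam, prod_congr rfl haff]
  have hprod := one_sub_sum_le_prod_one_sub s hu0 hu1
  have hsum : ∑ j ∈ s, u j = (∑ j ∈ s, (|lam j - gam j| ^ 2 +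
      |(1 - √(1 - lam j ^ 2)) - (1 - √(1 - gam j ^ 2))| ^ 2)) / 2 := by
    rw [sum_div]
  linarith

end FiniteRestriction

theorem tendsto_pdetOn_range_pdet {lam : ℕ → ℝ} (hlam : ∀ j, lam j ^ 2 ≤ 1) (J : Finset ℕ) :
    Tendsto (fun n => pdetOn lam (range n) J) atTop (𝓝 (pdet lam J)) :=
  (multipliable_of_nonneg_of_le_one (fun j => by split_ifs <;> nlinarith [hlam j])
    (fun j => by split_ifs <;> nlinarith [hlam j, sq_nonneg (lam j)])).tendsto_prod_tprod_nat

theorem exists_forall_subset_range (S : Finset (Finset ℕ)) :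
    ∃ N, ∀ J ∈ S, J ⊆ range N := by
  obtain ⟨N, hN⟩ := (S.sup id).exists_nat_subset_range
  exact ⟨N, fun J hJ => (le_sup (f := id) hJ).trans hN⟩

theorem tsum_sub_sqrt_pdet_sq_le {lam gam : ℕ → ℝ}
    (hlam : ∀ j, lam j ∈ Set.Icc (0 : ℝ) 1) (hgam : ∀ j, gam j ∈ Set.Icc (0 : ℝ) 1)
    (hu : Summable fun j => |lam j - gam j| ^ 2 +
      |(1 - √(1 - lam j ^ 2)) - (1 - √(1 - gam j ^ 2))| ^ 2) :
    ∑' J : Finset ℕ, (√(pdet lam J) - √(pdet gam J)) ^ 2 ≤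
      ∑' j, (|lam j - gam j| ^ 2 + |(1 - √(1 - lam j ^ 2)) - (1 - √(1 - gam j ^ 2))| ^ 2) := by
  refine tsum_le_of_sum_le' (tsum_nonneg fun j => by positivity) fun S => ?_
  obtain ⟨N, hN⟩ := exists_forall_subset_range S
  have hlim := tendsto_finsetSum S fun J _ =>
    (((tendsto_pdetOn_range_pdet (fun j => pow_le_one₀ (hlam j).1 (hlam j).2) J).sqrt).sub
      (tendsto_pdetOn_range_pdet (fun j => pow_le_one₀ (hgam j).1 (hgam j).2) J).sqrt).pow 2
  refine le_of_tendsto hlim (eventually_atTop.2 ⟨N, fun n hn => ?_⟩)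
  calc ∑ J ∈ S, (√(pdetOn lam (range n) J) - √(pdetOn gam (range n) J)) ^ 2
      ≤ ∑ J ∈ (range n).powerset, (√(pdetOn lam (range n) J) - √(pdetOn gam (range n) J)) ^ 2 :=
        sum_le_sum_of_subset_of_nonneg
          (fun J hJ => mem_powerset.2 ((hN J hJ).trans (range_mono hn)))
          fun _ _ _ => sq_nonneg _
    _ ≤ _ := sum_powerset_sub_sqrt_pdetOn_sq_le (fun j _ => hlam j) (fun j _ => hgam j)
    _ ≤ _ := hu.sum_le_tsum _ fun j _ => by positivity

/-- The squared Hellinger distance between the mixing distributions `p^λ` and `p^γ` is at most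
`∑_j |λ_j - γ_j|² + ∑_j |λ̌_j - γ̌_j|²` where `λ̌_j = 1 - √(1-λ_j²)`. -/
theorem hellinger_mixing_le (lam gam : ℕ → ℝ)
    (hlam : ∀ j, lam j ∈ Set.Icc (0 : ℝ) 1) (hgam : ∀ j, gam j ∈ Set.Icc (0 : ℝ) 1)
    (hlsum : Summable fun j => lam j ^ 2) (hgsum : Summable fun j => gam j ^ 2) :
    (1 / 2) * ∑' J : Finset ℕ, (Real.sqrt (pdet lam J) - Real.sqrt (pdet gam J)) ^ 2 ≤
      ∑' j, |lam j - gam j| ^ 2 +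
        ∑' j, |(1 - Real.sqrt (1 - lam j ^ 2)) - (1 - Real.sqrt (1 - gam j ^ 2))| ^ 2 := by
  have hsq_le_one : ∀ j, lam j ^ 2 ≤ 1 ∧ gam j ^ 2 ≤ 1 := fun j =>
    ⟨pow_le_one₀ (hlam j).1 (hlam j).2, pow_le_one₀ (hgam j).1 (hgam j).2⟩
  have hu₁ : Summable fun j => |lam j - gam j| ^ 2 :=
    .of_nonneg_of_le (fun j => by positivity)
      (fun j => by rw [sq_abs]; nlinarith [sq_nonneg (lam j + gam j)])
      ((hlsum.add hgsum).mul_left 2)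
  have hu₂ : Summable fun j => |(1 - √(1 - lam j ^ 2)) - (1 - √(1 - gam j ^ 2))| ^ 2 :=
    .of_nonneg_of_le (fun j => by positivity)
      (fun j => sq_abs_sqrt_one_sub_sq_sub_le (hsq_le_one j).1 (hsq_le_one j).2) (hlsum.add hgsum)
  have hbound := tsum_sub_sqrt_pdet_sq_le hlam hgam (hu₁.add hu₂)
  rw [hu₁.tsum_add hu₂] at hbound
  have hnonneg : 0 ≤ ∑' J : Finset ℕ, (√(pdet lam J) - √(pdet gam J)) ^ 2 :=
    tsum_nonneg fun J => sq_nonneg _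
  linarith
end
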